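/- If λ_max(R_k) → 0 and ‖θ_reg,k‖ ≤ C for all k, and λ_min(Σ_{i=0}^{k_rank} φ_iᵀΓ_iφ_i) = λ* > 0, then for all k ≥ k_rank the error θ̃_{k+1} = (R_k + Σ_{i=0}^k φ_iᵀΓ_iφ_i)⁻¹R_k(θ_reg,k - θ) satisfies ‖θ̃_{k+1}‖ ≤ (λ_max(R_k)/λ*)(C + ‖θ‖), and consequently θ̃_k → 0. -/

import Mathlib

/-!
Write `A = R_k + S_k`, so that `A θ̃_{k+1} = R_k (θ_reg,k - θ)`. In the Loewner order
`λ* • 1 ≤ S_{k_rank} ≤ S_k ≤ A` for `k ≥ k_rank`, hence by Cauchy–Schwarz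
`λ* ‖θ̃‖² ≤ ⟪θ̃, A θ̃⟫ = ⟪θ̃, R_k (θ_reg,k - θ)⟫ ≤ ‖θ̃‖ λ_max(R_k) ‖θ_reg,k - θ‖`,
where `‖R_k x‖ ≤ λ_max(R_k) ‖x‖` because `R_k² ≤ λ_max(R_k)² • 1` by the spectral mapping
theorem. Dividing by `λ*‖θ̃‖` gives the bound, and `λ_max(R_k) → 0` squeezes `θ̃_k` to `0`.
-/

open Matrix Finset Filter

noncomputable def euclNorm {n : ℕ} (x : Fin n → ℝ) : ℝ :=
  ‖(EuclideanSpace.equiv (Fin n) ℝ).symm x‖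

open scoped ComplexOrder MatrixOrder

lemma re_star_dotProduct_self_eq_norm_sq {𝕜 ι : Type*} [RCLike 𝕜] [Fintype ι] (x : ι → 𝕜) :
    RCLike.re (star x ⬝ᵥ x) = ‖(WithLp.toLp 2 x : EuclideanSpace 𝕜 ι)‖ ^ 2 := by
  rw [← inner_self_eq_norm_sq (𝕜 := 𝕜), EuclideanSpace.inner_toLp_toLp, dotProduct_comm]

namespace Matrix

variable {𝕜 ι : Type*} [RCLike 𝕜]

lemma monotone_sum_range_succ_of_posSemidef {f : ℕ → Matrix ι ι 𝕜} (hf : ∀ i, (f i).PosSemidef) :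
    Monotone fun k => ∑ i ∈ range (k + 1), f i := fun _ _ hab =>
  sum_le_sum_of_subset_of_nonneg (range_subset_range.2 (by omega)) fun i _ _ => (hf i).nonneg

variable [Fintype ι] [DecidableEq ι]

lemma re_star_dotProduct_algebraMap_mulVec (r : ℝ) (x : ι → 𝕜) :
    RCLike.re (star x ⬝ᵥ (algebraMap ℝ (Matrix ι ι 𝕜) r *ᵥ x))
      = r * ‖(WithLp.toLp 2 x : EuclideanSpace 𝕜 ι)‖ ^ 2 := by
  rw [Algebra.algebraMap_eq_smul_one, smul_mulVec, one_mulVec, dotProduct_smul,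
    RCLike.smul_re, re_star_dotProduct_self_eq_norm_sq]

lemma mul_norm_sq_le_re_star_dotProduct_mulVec {A : Matrix ι ι 𝕜} {r : ℝ}
    (h : algebraMap ℝ (Matrix ι ι 𝕜) r ≤ A) (x : ι → 𝕜) :
    r * ‖(WithLp.toLp 2 x : EuclideanSpace 𝕜 ι)‖ ^ 2 ≤ RCLike.re (star x ⬝ᵥ (A *ᵥ x)) := by
  have := (le_iff.1 h).re_dotProduct_nonneg x
  rw [sub_mulVec, dotProduct_sub, map_sub, re_star_dotProduct_algebraMap_mulVec] at this
  linarith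

lemma re_star_dotProduct_mulVec_le_mul_norm_sq {A : Matrix ι ι 𝕜} {r : ℝ}
    (h : A ≤ algebraMap ℝ (Matrix ι ι 𝕜) r) (x : ι → 𝕜) :
    RCLike.re (star x ⬝ᵥ (A *ᵥ x)) ≤ r * ‖(WithLp.toLp 2 x : EuclideanSpace 𝕜 ι)‖ ^ 2 := by
  have := (le_iff.1 h).re_dotProduct_nonneg x
  rw [sub_mulVec, dotProduct_sub, map_sub, re_star_dotProduct_algebraMap_mulVec] at this
  linarith

lemma IsHermitian.algebraMap_iInf_eigenvalues_le {A : Matrix ι ι 𝕜} (hA : A.IsHermitian) :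
    algebraMap ℝ (Matrix ι ι 𝕜) (⨅ i, hA.eigenvalues i) ≤ A := by
  rw [algebraMap_le_iff_le_spectrum hA.isSelfAdjoint, hA.spectrum_real_eq_range_eigenvalues]
  rintro _ ⟨i, rfl⟩
  exact ciInf_le (Set.finite_range _).bddBelow i

lemma PosSemidef.iSup_eigenvalues_nonneg {A : Matrix ι ι 𝕜} (hA : A.PosSemidef) :
    0 ≤ ⨆ i, hA.1.eigenvalues i :=
  Real.iSup_nonneg hA.eigenvalues_nonneg

lemma PosSemidef.sq_le_algebraMap_iSup_eigenvalues_sq {A : Matrix ι ι 𝕜} (hA : A.PosSemidef) :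
    A ^ 2 ≤ algebraMap ℝ (Matrix ι ι 𝕜) ((⨆ i, hA.1.eigenvalues i) ^ 2) := by
  rw [← cfc_pow_id (R := ℝ) A 2 hA.1.isSelfAdjoint,
    cfc_le_algebraMap_iff _ _ _ (by fun_prop) hA.1.isSelfAdjoint,
    hA.1.spectrum_real_eq_range_eigenvalues]
  rintro _ ⟨i, rfl⟩
  exact pow_le_pow_left₀ (hA.eigenvalues_nonneg i) (le_ciSup (Set.finite_range _).bddAbove i) 2

lemma PosSemidef.norm_mulVec_le_iSup_eigenvalues_mul {A : Matrix ι ι 𝕜} (hA : A.PosSemidef)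
    (x : ι → 𝕜) :
    ‖(WithLp.toLp 2 (A *ᵥ x) : EuclideanSpace 𝕜 ι)‖
      ≤ (⨆ i, hA.1.eigenvalues i) * ‖(WithLp.toLp 2 x : EuclideanSpace 𝕜 ι)‖ := by
  refine le_of_sq_le_sq ?_ (mul_nonneg hA.iSup_eigenvalues_nonneg (norm_nonneg _))
  rw [mul_pow, ← re_star_dotProduct_self_eq_norm_sq, star_mulVec, ← dotProduct_mulVec,
    mulVec_mulVec, hA.1.eq, ← sq]
  exact re_star_dotProduct_mulVec_le_mul_norm_sq hA.sq_le_algebraMap_iSup_eigenvalues_sq x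

lemma mul_norm_le_norm_mulVec {A : Matrix ι ι 𝕜} {r : ℝ}
    (h : algebraMap ℝ (Matrix ι ι 𝕜) r ≤ A) (x : ι → 𝕜) :
    r * ‖(WithLp.toLp 2 x : EuclideanSpace 𝕜 ι)‖
      ≤ ‖(WithLp.toLp 2 (A *ᵥ x) : EuclideanSpace 𝕜 ι)‖ := by
  set y : EuclideanSpace 𝕜 ι := WithLp.toLp 2 x
  have hcs : r * ‖y‖ ^ 2 ≤ ‖y‖ * ‖(WithLp.toLp 2 (A *ᵥ x) : EuclideanSpace 𝕜 ι)‖ := by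
    refine (mul_norm_sq_le_re_star_dotProduct_mulVec h x).trans ?_
    rw [dotProduct_comm, ← EuclideanSpace.inner_toLp_toLp]
    exact re_inner_le_norm _ _
  rcases (norm_nonneg y).eq_or_lt with hy | hy
  · rw [← hy, mul_zero]; exact norm_nonneg _
  · nlinarith

lemma norm_inv_mul_mulVec_le {A R : Matrix ι ι 𝕜} (hR : R.PosSemidef) {r : ℝ} (hr : 0 < r)
    (hA : algebraMap ℝ (Matrix ι ι 𝕜) r ≤ A) (v : ι → 𝕜) :
    ‖(WithLp.toLp 2 ((A⁻¹ * R) *ᵥ v) : EuclideanSpace 𝕜 ι)‖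
      ≤ (⨆ i, hR.1.eigenvalues i) / r * ‖(WithLp.toLp 2 v : EuclideanSpace 𝕜 ι)‖ := by
  by_cases hdet : IsUnit A.det
  · rw [div_mul_eq_mul_div, le_div_iff₀' hr]
    calc r * ‖(WithLp.toLp 2 ((A⁻¹ * R) *ᵥ v) : EuclideanSpace 𝕜 ι)‖
        ≤ ‖(WithLp.toLp 2 (R *ᵥ v) : EuclideanSpace 𝕜 ι)‖ := by
          simpa only [mulVec_mulVec, mul_nonsing_inv_cancel_left A R hdet]
            using mul_norm_le_norm_mulVec hA ((A⁻¹ * R) *ᵥ v)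
      _ ≤ _ := hR.norm_mulVec_le_iSup_eigenvalues_mul v
  · rw [nonsing_inv_apply_not_isUnit A hdet, zero_mul, zero_mulVec, WithLp.toLp_zero, norm_zero]
    exact mul_nonneg (div_nonneg hR.iSup_eigenvalues_nonneg hr.le) (norm_nonneg _)

end Matrix

lemma tendsto_zero_of_tendsto_euclNorm {α : Type*} {l : Filter α} {n : ℕ} {f : α → Fin n → ℝ}
    (h : Tendsto (fun a => euclNorm (f a)) l (nhds 0)) : Tendsto f l (nhds 0) := by
  have := ((EuclideanSpace.equiv (Fin n) ℝ).continuous.tendsto 0).comp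
    (tendsto_zero_iff_norm_tendsto_zero.2 h)
  rwa [map_zero] at this

theorem fading_reg_error_bound_and_convergence_general (p n : ℕ)
    (φ : ℕ → Matrix (Fin p) (Fin n) ℝ)
    (Γ : ℕ → Matrix (Fin p) (Fin p) ℝ) (hΓ : ∀ i, (Γ i).PosSemidef)
    (R : ℕ → Matrix (Fin n) (Fin n) ℝ) (hR : ∀ i, (R i).PosSemidef)
    (S : ℕ → Matrix (Fin n) (Fin n) ℝ)
    (hS : ∀ k, S k = ∑ i ∈ range (k + 1), (φ i)ᵀ * Γ i * φ i)
    (θreg : ℕ → Fin n → ℝ) (θtrue : Fin n → ℝ)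
    (C : ℝ) (hC : ∀ k, euclNorm (θreg k) ≤ C)
    (hRmax : Tendsto (fun k => ⨆ i, (hR k).1.eigenvalues i) atTop (nhds 0))
    (krank : ℕ) (hSr : (S krank).PosSemidef)
    (lamstar : ℝ) (hlam : lamstar = ⨅ i, hSr.1.eigenvalues i) (hlampos : 0 < lamstar)
    (θtil : ℕ → Fin n → ℝ)
    (hθtil : ∀ k, θtil (k + 1) = ((R k + S k)⁻¹ * R k).mulVec (θreg k - θtrue)) :
    (∀ k, krank ≤ k →
      euclNorm (θtil (k + 1)) ≤ ((⨆ i, (hR k).1.eigenvalues i) / lamstar) * (C + euclNorm θtrue)) ∧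
    Tendsto θtil atTop (nhds 0) := by
  have hS_mono : Monotone S := by
    rw [show S = _ from funext hS]
    exact monotone_sum_range_succ_of_posSemidef fun i => by
      simpa using (hΓ i).conjTranspose_mul_mul_same (φ i)
  have bound : ∀ k, krank ≤ k →
      euclNorm (θtil (k + 1)) ≤ ((⨆ i, (hR k).1.eigenvalues i) / lamstar) * (C + euclNorm θtrue) := by
    intro k hk
    have hlam_le : algebraMap ℝ _ lamstar ≤ R k + S k :=
      calc algebraMap ℝ _ lamstar ≤ S krank := hlam ▸ hSr.1.algebraMap_iInf_eigenvalues_le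
        _ ≤ S k := hS_mono hk
        _ ≤ R k + S k := le_add_of_nonneg_left (hR k).nonneg
    rw [hθtil]
    refine (norm_inv_mul_mulVec_le (hR k) hlampos hlam_le _).trans
      (mul_le_mul_of_nonneg_left ?_ (div_nonneg (hR k).iSup_eigenvalues_nonneg hlampos.le))
    exact (norm_sub_le _ _).trans (add_le_add (hC k) le_rfl)
  refine ⟨bound, ?_⟩
  rw [← tendsto_add_atTop_iff_nat 1]
  refine tendsto_zero_of_tendsto_euclNorm (squeeze_zero' (.of_forall fun _ => norm_nonneg _)
    (eventually_atTop.2 ⟨krank, bound⟩) ?_)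
  simpa using (hRmax.div_const lamstar).mul_const (C + euclNorm θtrue)

theorem fading_reg_error_bound_and_convergence (p n : ℕ)
    (φ : ℕ → Matrix (Fin p) (Fin n) ℝ)
    (Γ : ℕ → Matrix (Fin p) (Fin p) ℝ) (hΓ : ∀ i, (Γ i).PosSemidef)
    (R : ℕ → Matrix (Fin n) (Fin n) ℝ) (hR : ∀ i, (R i).PosSemidef)
    (S : ℕ → Matrix (Fin n) (Fin n) ℝ)
    (hS : ∀ k, S k = ∑ i ∈ range (k + 1), (φ i)ᵀ * Γ i * φ i)
    (hpd : ∀ k, (R k + S k).PosDef)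
    (θreg : ℕ → Fin n → ℝ) (θtrue : Fin n → ℝ)
    (C : ℝ) (hC : ∀ k, euclNorm (θreg k) ≤ C)
    (hRmax : Tendsto (fun k => ⨆ i, (hR k).1.eigenvalues i) atTop (nhds 0))
    (krank : ℕ) (hSr : (S krank).PosSemidef)
    (lamstar : ℝ) (hlam : lamstar = ⨅ i, hSr.1.eigenvalues i) (hlampos : 0 < lamstar)
    (θtil : ℕ → Fin n → ℝ)
    (hθtil : ∀ k, θtil (k + 1) = ((R k + S k)⁻¹ * R k).mulVec (θreg k - θtrue)) :
    (∀ k, krank ≤ k →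
      euclNorm (θtil (k + 1)) ≤ ((⨆ i, (hR k).1.eigenvalues i) / lamstar) * (C + euclNorm θtrue)) ∧
    Tendsto θtil atTop (nhds 0) :=
  fading_reg_error_bound_and_convergence_general p n φ Γ hΓ R hR S hS θreg θtrue C hC hRmax krank
    hSr lamstar hlam hlampos θtil hθtil
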